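/- Let θ be a ternary relation on ℕ, n, d ∈ ℕ, and let X ⊆ ℕ be a finite set that is ω^{n+2}·(d, …, d)-large*(θ) (n repetitions of d), exp-sparse, and satisfies 2^{d^n} ≤ min X. Let f be a 2-coloring of the 2-element subsets of X. Then there exists a family (Y_σ)_{σ ∈ d^n}, indexed by the sequences of length n over {0,…,d−1}, of ω^n-large*(θ) subsets of X such that: (i) Y_σ < Y_τ and Y_σ, Y_τ are θ-apart whenever σ is lexicographically before τ, and more generally the map g on d^{≤n} defined by g(σ) = ⋃{Y_ρ : ρ ∈ d^n extends σ} satisfies that for every ℓ ≤ n and σ, τ ∈ d^ℓ with σ lexicographically before τ, g(σ) < g(τ) and g(σ), g(τ) are θ-apart (so Y = ⋃_σ Y_σ is ω^n·(d,…,d)-large*(θ) with n repetitions); and (ii) there is a coloring g' of the 2-element subsets of d^n with 2 colors such that for all σ ≠ τ in d^n, all x ∈ Y_σ and y ∈ Y_τ, f({x,y}) = g'({σ,τ}). -/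

import Mathlib

/-- The minimum of a finite set of naturals (`0` if empty). -/
noncomputable def minN (X : Finset ℕ) : ℕ := sInf (X : Set ℕ)

/-- The maximum of a finite set of naturals (`0` if empty). -/
def maxN (X : Finset ℕ) : ℕ := X.sup id

/-- `E` lies entirely below `F`. -/
def SetBelow (E F : Finset ℕ) : Prop := ∀ x ∈ E, ∀ y ∈ F, x < y

/-- `E` and `F` are `θ`-apart: for every `x < max E` there is `y < min F`
with `θ x y z` for all `z < max F`. -/
def ThetaApart (θ : ℕ → ℕ → ℕ → Prop) (E F : Finset ℕ) : Prop :=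
  ∀ x < maxN E, ∃ y < minN F, ∀ z < maxN F, θ x y z

/-- `L·k`: finite sets containing `k` pairwise `θ`-apart members `X₀ < ⋯ < X_{k-1}` of `L`. -/
def MulK (θ : ℕ → ℕ → ℕ → Prop) (L : Set (Finset ℕ)) (k : ℕ) : Set (Finset ℕ) :=
  {F | ∃ X : Fin k → Finset ℕ, (∀ i, X i ∈ L) ∧ (∀ i, X i ⊆ F) ∧
    ∀ i j, i < j → SetBelow (X i) (X j) ∧ ThetaApart θ (X i) (X j)}

/-- `L·σ` for a finite sequence `σ`: `L·ε = L`, `L·(k⌢τ) = (L·k)·τ`. -/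
def MulSeq (θ : ℕ → ℕ → ℕ → Prop) (L : Set (Finset ℕ)) : List ℕ → Set (Finset ℕ)
  | [] => L
  | k :: τ => MulSeq θ (MulK θ L k) τ

/-- `L^θ_n`: the `ω^n`-large*(θ) finite sets. -/
noncomputable def LargeStar (θ : ℕ → ℕ → ℕ → Prop) : ℕ → Set (Finset ℕ)
  | 0 => {X | X.Nonempty}
  | n + 1 => {X | X.Nonempty ∧
      X.erase (minN X) ∈ MulSeq θ (LargeStar θ n) (List.replicate (n + 1) (minN X))}

/-- `ω^n`-largeness(θ) (the non-starred notion). -/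
noncomputable def LargeTheta (θ : ℕ → ℕ → ℕ → Prop) : ℕ → Set (Finset ℕ)
  | 0 => {X | X.Nonempty}
  | n + 1 => {X | X.Nonempty ∧ X.erase (minN X) ∈ MulK θ (LargeTheta θ n) (minN X)}

/-- `L·k` without θ-apartness (plain largeness product). -/
def MulKPlain (L : Set (Finset ℕ)) (k : ℕ) : Set (Finset ℕ) :=
  {F | ∃ X : Fin k → Finset ℕ, (∀ i, X i ∈ L) ∧ (∀ i, X i ⊆ F) ∧
    ∀ i j, i < j → SetBelow (X i) (X j)}

/-- Ketonen–Solovay `ω^n`-largeness (no θ). -/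
noncomputable def LargePlain : ℕ → Set (Finset ℕ)
  | 0 => {X | X.Nonempty}
  | n + 1 => {X | X.Nonempty ∧ X.erase (minN X) ∈ MulKPlain (LargePlain n) (minN X)}

/-- `g`-sparsity. -/
def GSparse (g : ℕ → ℕ) (X : Finset ℕ) : Prop := ∀ x ∈ X, ∀ y ∈ X, x < y → g x < y

/-- exp-sparsity. -/
def ExpSparse (X : Finset ℕ) : Prop := ∀ x ∈ X, ∀ y ∈ X, x < y → 4 ^ x < y

/-- `ω^k`-sparsity. -/
def OmegaSparse (k : ℕ) (X : Finset ℕ) : Prop :=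
  ∀ x ∈ X, ∀ y ∈ X, x < y → Finset.Ioc x y ∈ LargePlain k

/-!
Unfolding `X ∈ L^θ_{n+2}·(d,…,d)` gives a `d`-ary tree of depth `n` whose nodes on each level are
pairwise θ-apart and whose leaves `Z_σ` are `ω^{n+2}`-large*(θ). The leaves are shrunk one at a
time, from the lexicographically last to the first: `Z_σ` is replaced by an `ω^n`-large*(θ) subset
`Y_σ` on which `f {z, ·}` is constant for every `z` that is either a point of `X` below `Z_σ` or the
minimum of an already chosen `Y_τ`. Then for `σ < τ`, `x ∈ Y_σ` and `y ∈ Y_τ`,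
`f {x, y} = f {x, min Y_τ} = f {min Y_σ, min Y_τ}`.

Shrinking `Z_σ` means colouring it by the `2^|S|` patterns `z ↦ f {z, y}` on the relevant set `S`;
exp-sparseness and `2^{dⁿ} ≤ min X` keep `2^|S|` below `min Z_σ`. An exp-sparse
`ω^{ℓ+2}`-large*(θ) set coloured with fewer colours than its minimum then has a monochromatic
`ω^ℓ`-large*(θ) subset. Inductively, among more pairwise-below `ω^{ℓ+1}`-large*(θ) blocks than
colours there is a monochromatic `ω^ℓ`-large*(θ) set: by pigeonhole over its own sub-blocks, each
block has a colour that *serves* it, i.e. it contains monochromatic `ω^{ℓ-1}·(x,…,x)`-large*(θ)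
sets of that colour for all `x` up to `min/#colours`. Each serving colour occurs in its block, so
some block is served by the colour of a point `x` of an earlier block, and `x` followed by such a
set of width `x` is `ω^ℓ`-large*(θ), because `x·#colours ≤ x² < 4^x` lies below the later block.
-/

open Finset

section Basic

variable {θ : ℕ → ℕ → ℕ → Prop}

lemma minN_mem {S : Finset ℕ} (h : S.Nonempty) : minN S ∈ S := by
  exact_mod_cast Nat.sInf_mem (s := (S : Set ℕ)) (by exact_mod_cast h)

lemma minN_le {S : Finset ℕ} {y : ℕ} (h : y ∈ S) : minN S ≤ y :=
  Nat.sInf_le (by exact_mod_cast h)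

lemma minN_le_minN {S T : Finset ℕ} (h : S ⊆ T) (hS : S.Nonempty) : minN T ≤ minN S :=
  minN_le (h (minN_mem hS))

lemma minN_eq {S : Finset ℕ} {x : ℕ} (hx : x ∈ S) (h : ∀ y ∈ S, x ≤ y) : minN S = x :=
  le_antisymm (minN_le hx) (h _ (minN_mem ⟨x, hx⟩))

lemma maxN_mono {S T : Finset ℕ} (h : S ⊆ T) : maxN S ≤ maxN T :=
  Finset.sup_mono h

lemma SetBelow.mono {E E' F F' : Finset ℕ} (h : SetBelow E F) (hE : E' ⊆ E) (hF : F' ⊆ F) :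
    SetBelow E' F' :=
  fun x hx y hy => h x (hE hx) y (hF hy)

lemma ThetaApart.mono {E E' F F' : Finset ℕ} (h : ThetaApart θ E F) (hE : E' ⊆ E) (hF : F' ⊆ F)
    (hF' : F'.Nonempty) : ThetaApart θ E' F' := by
  intro x hx
  obtain ⟨y, hy, hθ⟩ := h x (hx.trans_le (maxN_mono hE))
  exact ⟨y, hy.trans_le (minN_le_minN hF hF'), fun z hz => hθ z (hz.trans_le (maxN_mono hF))⟩

lemma ExpSparse.mono {X Y : Finset ℕ} (h : ExpSparse X) (hYX : Y ⊆ X) : ExpSparse Y :=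
  fun x hx y hy => h x (hYX hx) y (hYX hy)

lemma mulSeq_append (L : Set (Finset ℕ)) (σ τ : List ℕ) :
    MulSeq θ L (σ ++ τ) = MulSeq θ (MulSeq θ L σ) τ := by
  induction σ generalizing L with
  | nil => rfl
  | cons k σ ih => exact ih _

lemma mulSeq_replicate_succ (L : Set (Finset ℕ)) (s k : ℕ) :
    MulSeq θ L (List.replicate (s + 1) k) = MulK θ (MulSeq θ L (List.replicate s k)) k := by
  rw [List.replicate_succ', mulSeq_append]
  rfl

lemma exists_subset_mem_of_mem_mulSeq {L : Set (Finset ℕ)} {k : ℕ} (hk : 0 < k) :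
    ∀ (s : ℕ) {G : Finset ℕ}, G ∈ MulSeq θ L (List.replicate s k) → ∃ P ⊆ G, P ∈ L
  | 0, G, hG => ⟨G, subset_rfl, hG⟩
  | s + 1, G, hG => by
    rw [mulSeq_replicate_succ] at hG
    obtain ⟨V, hVL, hVG, -⟩ := hG
    obtain ⟨P, hPV, hP⟩ := exists_subset_mem_of_mem_mulSeq hk s (hVL ⟨0, hk⟩)
    exact ⟨P, hPV.trans (hVG _), hP⟩

lemma largeStar_nonempty {m : ℕ} {S : Finset ℕ} (h : S ∈ LargeStar θ m) : S.Nonempty := by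
  cases m with
  | zero => exact h
  | succ m => exact h.1

lemma nonempty_of_mem_mulSeq_largeStar {ℓ s k : ℕ} (hk : 0 < k) {G : Finset ℕ}
    (h : G ∈ MulSeq θ (LargeStar θ ℓ) (List.replicate s k)) : G.Nonempty := by
  obtain ⟨P, hPG, hP⟩ := exists_subset_mem_of_mem_mulSeq hk s h
  exact (largeStar_nonempty hP).mono hPG

lemma insert_mem_largeStar_succ {ℓ x : ℕ} {B : Finset ℕ} (hx : ∀ y ∈ B, x < y)
    (hB : B ∈ MulSeq θ (LargeStar θ ℓ) (List.replicate (ℓ + 1) x)) :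
    insert x B ∈ LargeStar θ (ℓ + 1) := by
  have hmin : minN (insert x B) = x := by
    refine minN_eq (mem_insert_self x B) fun y hy => ?_
    rcases mem_insert.1 hy with rfl | hy
    exacts [le_rfl, (hx y hy).le]
  refine ⟨insert_nonempty x B, ?_⟩
  rwa [hmin, erase_insert fun h => lt_irrefl x (hx x h)]

end Basic

lemma mul_self_lt_four_pow (x : ℕ) : x * x < 4 ^ x := by
  have h := Nat.lt_two_pow_self (n := x)
  calc x * x < 2 ^ x * 2 ^ x := Nat.mul_self_lt_mul_self h
    _ = 4 ^ x := by rw [← mul_pow]; norm_num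

lemma two_pow_lt_of_lt_card_filter_add {X : Finset ℕ} {m k j : ℕ} (hX : ExpSparse X) (hm : m ∈ X)
    (hk : 2 ^ k ≤ minN X) (hj : j < (X.filter (· < m)).card + k) : 2 ^ j < m := by
  rcases (X.filter (· < m)).eq_empty_or_nonempty with h | h
  · rw [h, card_empty, zero_add] at hj
    exact (Nat.pow_lt_pow_right (by norm_num) hj).trans_le (hk.trans (minN_le hm))
  · set u := (X.filter (· < m)).max' h
    obtain ⟨huX, hum⟩ := mem_filter.1 (max'_mem _ h)
    have hcard : (X.filter (· < m)).card ≤ u + 1 := by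
      simpa using card_le_card fun v hv => mem_range.2 (Nat.lt_succ_of_le (le_max' _ v hv))
    have hku : k < u := (Nat.lt_two_pow_self.trans_le hk).trans_le (minN_le huX)
    calc 2 ^ j ≤ 2 ^ (2 * u) := Nat.pow_le_pow_right (by norm_num) (by omega)
      _ = 4 ^ u := by rw [pow_mul]; norm_num
      _ < m := hX u huX m hm hum

section MonochromaticRefinement

variable (θ : ℕ → ℕ → ℕ → Prop) {κ : Type*} (C : ℕ → κ)

def Serves (ℓ s w : ℕ) (D : Finset ℕ) (i : κ) : Prop :=
  ∀ x ≤ w, ∃ B ⊆ D, (∀ y ∈ B, C y = i) ∧ B ∈ MulSeq θ (LargeStar θ ℓ) (List.replicate s x)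

def MonoRefinement [Fintype κ] (ℓ : ℕ) : Prop :=
  ∀ (q : ℕ) (V : Fin q → Finset ℕ) (D : Finset ℕ), Fintype.card κ < q → ExpSparse D →
    (∀ y ∈ D, Fintype.card κ < y) → (∀ t, V t ∈ LargeStar θ (ℓ + 1)) → (∀ t, V t ⊆ D) →
    (∀ s t, s < t → SetBelow (V s) (V t)) →
    ∃ i, ∃ B ⊆ D, (∀ y ∈ B, C y = i) ∧ B ∈ LargeStar θ ℓ

variable {θ C}

lemma Serves.mono {ℓ s w : ℕ} {D D' : Finset ℕ} {i : κ} (h : Serves θ C ℓ s w D i)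
    (hD : D ⊆ D') : Serves θ C ℓ s w D' i := fun x hx => by
  obtain ⟨B, hBD, hB⟩ := h x hx
  exact ⟨B, hBD.trans hD, hB⟩

variable [Fintype κ]

theorem exists_serves_succ {L : Set (Finset ℕ)} {q w ℓ s : ℕ} {D : Finset ℕ}
    (hD : D ∈ MulK θ L q) (hw : Fintype.card κ * w ≤ q)
    (hV : ∀ V ∈ L, V ⊆ D → ∃ i, Serves θ C ℓ s w V i) : ∃ i, Serves θ C ℓ (s + 1) w D i := by
  classical
  obtain ⟨V, hVL, hVD, hVsep⟩ := hD
  choose c hc using fun t => hV (V t) (hVL t) (hVD t)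
  have : Nonempty κ := ⟨C 0⟩
  obtain ⟨i, hi⟩ := Fintype.exists_le_card_fiber_of_mul_le_card c (n := w) (by simpa using hw)
  refine ⟨i, fun x hx => ?_⟩
  obtain ⟨F, hF, hFcard⟩ := exists_subset_card_eq (hx.trans hi)
  set e := F.orderEmbOfFin hFcard
  have hce : ∀ j, c (e j) = i := fun j => (mem_filter.1 (hF (F.orderEmbOfFin_mem hFcard j))).2
  choose B hBV hBC hB using fun j => hc (e j) x hx
  refine ⟨univ.biUnion B, biUnion_subset.2 fun j _ => (hBV j).trans (hVD _), ?_, ?_⟩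
  · intro y hy
    obtain ⟨j, -, hyj⟩ := mem_biUnion.1 hy
    exact (hBC j y hyj).trans (hce j)
  · rw [mulSeq_replicate_succ]
    refine ⟨B, hB, fun j => subset_biUnion_of_mem B (mem_univ j), fun j j' hjj' => ?_⟩
    obtain ⟨hbelow, hapart⟩ := hVsep _ _ (e.strictMono hjj')
    exact ⟨hbelow.mono (hBV j) (hBV j'),
      hapart.mono (hBV j) (hBV j') (nonempty_of_mem_mulSeq_largeStar j'.pos (hB j'))⟩

theorem exists_serves {ℓ : ℕ} (h : MonoRefinement θ C ℓ) :
    ∀ (s : ℕ) {q : ℕ} {D : Finset ℕ}, Fintype.card κ < q →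
      D ∈ MulSeq θ (LargeStar θ (ℓ + 1)) (List.replicate (s + 1) q) → ExpSparse D →
      (∀ y ∈ D, Fintype.card κ < y) → ∃ i, Serves θ C ℓ s (q / Fintype.card κ) D i
  | 0, q, D, hq, hD, hsp, hbig => by
    obtain ⟨V, hVL, hVD, hVsep⟩ := hD
    obtain ⟨i, B, hBD, hBC, hB⟩ := h q V D hq hsp hbig hVL hVD fun s t hst => (hVsep s t hst).1
    exact ⟨i, fun _ _ => ⟨B, hBD, hBC, hB⟩⟩
  | s + 1, q, D, hq, hD, hsp, hbig => by
    rw [mulSeq_replicate_succ] at hD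
    exact exists_serves_succ hD (Nat.mul_div_le q _) fun V hV hVD =>
      exists_serves h s hq hV (hsp.mono hVD) fun y hy => hbig y (hVD hy)

theorem exists_serves_of_mem_largeStar {ℓ : ℕ} (h : MonoRefinement θ C ℓ) {Q : Finset ℕ}
    (hQ : Q ∈ LargeStar θ (ℓ + 2)) (hsp : ExpSparse Q) (hbig : ∀ y ∈ Q, Fintype.card κ < y) :
    ∃ i, Serves θ C ℓ (ℓ + 1) (minN Q / Fintype.card κ) Q i := by
  obtain ⟨hQne, hQ⟩ := hQ
  obtain ⟨i, hi⟩ := exists_serves h (ℓ + 1) (hbig _ (minN_mem hQne)) hQ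
    (hsp.mono (erase_subset _ _)) fun y hy => hbig y (mem_of_mem_erase hy)
  exact ⟨i, hi.mono (erase_subset _ _)⟩

theorem monoRefinement_zero : MonoRefinement θ C 0 := by
  intro q V D hq _ _ hVL hVD _
  obtain ⟨y, hy⟩ := largeStar_nonempty (hVL ⟨0, by omega⟩)
  exact ⟨C y, {y}, singleton_subset_iff.2 (hVD _ hy), by simp, singleton_nonempty y⟩

theorem monoRefinement_succ {ℓ : ℕ} (h : MonoRefinement θ C ℓ) : MonoRefinement θ C (ℓ + 1) := by
  intro q V D hq hsp hbig hVL hVD hVsep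
  have hκ : 0 < Fintype.card κ := Fintype.card_pos_iff.2 ⟨C 0⟩
  have hVne t : (V t).Nonempty := largeStar_nonempty (hVL t)
  choose c hc using fun t => exists_serves_of_mem_largeStar h (hVL t) (hsp.mono (hVD t))
    fun y hy => hbig y (hVD t hy)
  have hrealised t : ∃ y ∈ V t, C y = c t := by
    obtain ⟨B, hBV, hBC, hB⟩ := hc t 1 <| (Nat.le_div_iff_mul_le hκ).2 <| by
      simpa using (hbig _ (hVD t (minN_mem (hVne t)))).le
    obtain ⟨y, hy⟩ := nonempty_of_mem_mulSeq_largeStar one_pos hB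
    exact ⟨y, hBV hy, hBC y hy⟩
  -- a colour serving a later block already occurs in an earlier one
  obtain ⟨s, t, hst, x, hx, hxc⟩ : ∃ s t, s < t ∧ ∃ x ∈ V s, C x = c t := by
    obtain ⟨s, t, hne, hst⟩ := Fintype.exists_ne_map_eq_of_card_lt c (by simpa using hq)
    rcases hne.lt_or_gt with hlt | hlt
    · obtain ⟨y, hy, hyc⟩ := hrealised s
      exact ⟨s, t, hlt, y, hy, hyc.trans hst⟩
    · obtain ⟨y, hy, hyc⟩ := hrealised t
      exact ⟨t, s, hlt, y, hy, hyc.trans hst.symm⟩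
  have hxV : ∀ y ∈ V t, x < y := hVsep s t hst x hx
  have hmin := minN_mem (hVne t)
  have hwidth : x ≤ minN (V t) / Fintype.card κ := by
    rw [Nat.le_div_iff_mul_le hκ]
    calc x * Fintype.card κ ≤ x * x := Nat.mul_le_mul_left _ (hbig x (hVD s hx)).le
      _ ≤ 4 ^ x := (mul_self_lt_four_pow x).le
      _ ≤ minN (V t) := (hsp x (hVD s hx) _ (hVD t hmin) (hxV _ hmin)).le
  obtain ⟨B, hBV, hBC, hB⟩ := hc t x hwidth
  refine ⟨c t, insert x B, insert_subset (hVD s hx) (hBV.trans (hVD t)), fun y hy => ?_,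
    insert_mem_largeStar_succ (fun y hy => hxV y (hBV hy)) hB⟩
  rcases mem_insert.1 hy with rfl | hy
  exacts [hxc, hBC y hy]

variable (C) in
theorem monoRefinement : ∀ ℓ, MonoRefinement θ C ℓ
  | 0 => monoRefinement_zero
  | ℓ + 1 => monoRefinement_succ (monoRefinement ℓ)

variable (C) in
theorem exists_monochromatic_subset {m : ℕ} {Z : Finset ℕ} (hZ : Z ∈ LargeStar θ (m + 2))
    (hsp : ExpSparse Z) (hκ : Fintype.card κ < minN Z) :
    ∃ i, ∃ Y ⊆ Z, (∀ y ∈ Y, C y = i) ∧ Y ∈ LargeStar θ m := by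
  obtain ⟨-, hZ⟩ := hZ
  rw [mulSeq_replicate_succ] at hZ
  obtain ⟨V, hVL, hVZ, hVsep⟩ := hZ
  choose W hWV hW using fun t => exists_subset_mem_of_mem_mulSeq (by omega) _ (hVL t)
  exact monoRefinement C m _ W Z hκ hsp (fun y hy => hκ.trans_le (minN_le hy)) hW
    (fun t => (hWV t).trans ((hVZ t).trans (erase_subset _ _)))
    fun s t hst => (hVsep s t hst).1.mono (hWV s) (hWV t)

end MonochromaticRefinement

def HomogeneousOver {β : Type*} (f : Finset ℕ → β) (S Y : Finset ℕ) : Prop :=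
  ∀ z ∈ S, ∀ y ∈ Y, ∀ y' ∈ Y, f {z, y} = f {z, y'}

lemma HomogeneousOver.mono {β : Type*} {f : Finset ℕ → β} {S S' Y : Finset ℕ}
    (h : HomogeneousOver f S Y) (hS : S' ⊆ S) : HomogeneousOver f S' Y :=
  fun z hz => h z (hS hz)

theorem exists_homogeneousOver_subset {θ : ℕ → ℕ → ℕ → Prop} {β : Type*} [Fintype β]
    (f : Finset ℕ → β) (S : Finset ℕ) {m : ℕ} {Z : Finset ℕ} (hZ : Z ∈ LargeStar θ (m + 2))
    (hsp : ExpSparse Z) (hS : Fintype.card β ^ S.card < minN Z) :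
    ∃ Y ⊆ Z, Y ∈ LargeStar θ m ∧ HomogeneousOver f S Y := by
  obtain ⟨i, Y, hYZ, hYi, hY⟩ := exists_monochromatic_subset (fun y (z : S) => f {↑z, y}) hZ hsp
    (by simpa using hS)
  exact ⟨Y, hYZ, hY, fun z hz y hy y' hy' =>
    congrFun ((hYi y hy).trans (hYi y' hy').symm) ⟨z, hz⟩⟩

section Tree

variable {θ : ℕ → ℕ → ℕ → Prop} {d : ℕ}

def words (d n : ℕ) : Finset (List (Fin d)) :=
  univ.image (List.ofFn : (Fin n → Fin d) → List (Fin d))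

lemma mem_words {n : ℕ} {σ : List (Fin d)} : σ ∈ words d n ↔ σ.length = n := by
  refine ⟨fun h => ?_, fun h => ?_⟩
  · obtain ⟨v, -, rfl⟩ := mem_image.1 h
    exact List.length_ofFn
  · subst h
    exact mem_image.2 ⟨_, mem_univ _, List.ofFn_getElem⟩

lemma card_words_le (d n : ℕ) : (words d n).card ≤ d ^ n :=
  card_image_le.trans (by simp)

structure IsSeparatedTree (θ : ℕ → ℕ → ℕ → Prop) (L : Set (Finset ℕ)) (k : ℕ)
    (N : List (Fin d) → Finset ℕ) : Prop where
  prefix_subset : ∀ σ ρ, N (σ ++ ρ) ⊆ N σ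
  leaf_mem : ∀ σ, σ.length = k → N σ ∈ L
  apart : ∀ σ τ, σ.length = τ.length → τ.length ≤ k → List.Lex (· < ·) σ τ →
    SetBelow (N σ) (N τ) ∧ ThetaApart θ (N σ) (N τ)

lemma IsSeparatedTree.nonempty {L : Set (Finset ℕ)} {k : ℕ} {N : List (Fin d) → Finset ℕ}
    (hN : IsSeparatedTree θ L k N) (hL : ∀ P ∈ L, P.Nonempty) (b : Fin d) {τ : List (Fin d)}
    (hτ : τ.length ≤ k) : (N τ).Nonempty :=
  (hL _ (hN.leaf_mem (τ ++ List.replicate (k - τ.length) b) (by simp; omega))).mono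
    (hN.prefix_subset τ _)

theorem exists_isSeparatedTree {L : Set (Finset ℕ)} (hL : ∀ P ∈ L, P.Nonempty) :
    ∀ (k : ℕ) {X : Finset ℕ}, X ∈ MulSeq θ L (List.replicate k d) →
      ∃ N : List (Fin d) → Finset ℕ, N [] = X ∧ IsSeparatedTree θ L k N
  | 0, X, hX => by
    refine ⟨fun _ => X, rfl, fun _ _ => subset_rfl, fun _ _ => hX, fun σ τ hlen hτ hlex => ?_⟩
    obtain rfl : τ = [] := List.eq_nil_of_length_eq_zero (by omega)
    obtain rfl : σ = [] := List.eq_nil_of_length_eq_zero hlen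
    cases hlex
  | k + 1, X, hX => by
    rw [mulSeq_replicate_succ] at hX
    obtain ⟨V, hVL, hVX, hVsep⟩ := hX
    choose N hNV hN using fun a => exists_isSeparatedTree hL k (hVL a)
    have hNsub a σ : N a σ ⊆ V a := hNV a ▸ (hN a).prefix_subset [] σ
    refine ⟨fun | [] => X | a :: σ => N a σ, rfl, ⟨?_, ?_, ?_⟩⟩
    · rintro (_ | ⟨a, σ⟩) ρ
      · cases ρ with
        | nil => exact subset_rfl
        | cons a ρ => exact (hNsub a ρ).trans (hVX a)
      · exact (hN a).prefix_subset σ ρ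
    · rintro (_ | ⟨a, σ⟩) hσ
      · simp at hσ
      · exact (hN a).leaf_mem σ (by simpa using hσ)
    · rintro (_ | ⟨a, σ⟩) (_ | ⟨b, τ⟩) hlen hτ hlex
      · cases hlex
      · simp at hlen
      · cases hlex
      · simp only [List.length_cons, add_left_inj, add_le_add_iff_right] at hlen hτ
        cases hlex with
        | cons h => exact (hN a).apart σ τ hlen hτ h
        | rel hab =>
          obtain ⟨hbelow, hapart⟩ := hVsep a b hab
          exact ⟨hbelow.mono (hNsub a σ) (hNsub b τ),
            hapart.mono (hNsub a σ) (hNsub b τ) ((hN b).nonempty hL b hτ)⟩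

open Classical in
noncomputable def subtreeUnion (Y : List (Fin d) → Finset ℕ) (n : ℕ) (σ : List (Fin d)) :
    Finset ℕ :=
  ((words d n).filter (σ <+: ·)).biUnion Y

lemma coe_subtreeUnion (Y : List (Fin d) → Finset ℕ) (n : ℕ) (σ : List (Fin d)) :
    (↑(subtreeUnion Y n σ) : Set ℕ) =
      ⋃ (ρ : List (Fin d)) (_ : ρ.length = n ∧ σ <+: ρ), (↑(Y ρ) : Set ℕ) := by
  ext
  simp [subtreeUnion, mem_words]

lemma IsSeparatedTree.subtreeUnion_apart {L : Set (Finset ℕ)} {n : ℕ}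
    {N Y : List (Fin d) → Finset ℕ} (hN : IsSeparatedTree θ L n N)
    (hY : ∀ ρ, ρ.length = n → Y ρ ⊆ N ρ ∧ (Y ρ).Nonempty) {σ τ : List (Fin d)}
    (hlen : σ.length = τ.length) (hτ : τ.length ≤ n) (hlex : List.Lex (· < ·) σ τ) :
    SetBelow (subtreeUnion Y n σ) (subtreeUnion Y n τ) ∧
      ThetaApart θ (subtreeUnion Y n σ) (subtreeUnion Y n τ) := by
  have hsub : ∀ π, subtreeUnion Y n π ⊆ N π := fun π => biUnion_subset.2 fun ρ hρ => by
    obtain ⟨hρ, r, rfl⟩ := mem_filter.1 hρ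
    exact (hY _ (mem_words.1 hρ)).1.trans (hN.prefix_subset π r)
  obtain ⟨b, τ', rfl⟩ : ∃ b τ', τ = b :: τ' :=
    List.exists_cons_of_ne_nil (by rintro rfl; cases hlex)
  set ρ := b :: τ' ++ List.replicate (n - (b :: τ').length) b
  have hρ : ρ.length = n := by simp only [ρ, List.length_append, List.length_replicate]; omega
  have hne : (subtreeUnion Y n (b :: τ')).Nonempty :=
    (hY ρ hρ).2.mono (subset_biUnion_of_mem Y (mem_filter.2 ⟨mem_words.2 hρ, _, rfl⟩))
  obtain ⟨hbelow, hapart⟩ := hN.apart σ _ hlen hτ hlex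
  exact ⟨hbelow.mono (hsub σ) (hsub _), hapart.mono (hsub σ) (hsub _) hne⟩

end Tree

section Family

variable {ι β : Type*} [LinearOrder ι] (f : Finset ℕ → β) (P : Finset ℕ → Prop) (X : Finset ℕ)
  (Z : ι → Finset ℕ)

theorem exists_homogeneous_family_minN (s : Finset ι) (hZX : ∀ i ∈ s, Z i ⊆ X)
    (hZ : ∀ i ∈ s, ∀ j ∈ s, i < j → SetBelow (Z i) (Z j))
    (hrefine : ∀ i ∈ s, ∀ T : Finset ℕ, T.card < s.card → ∃ Y ⊆ Z i, Y.Nonempty ∧ P Y ∧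
      HomogeneousOver f (X.filter (· < minN (Z i)) ∪ T) Y) :
    ∃ Y : ι → Finset ℕ, (∀ i ∈ s, Y i ⊆ Z i ∧ (Y i).Nonempty ∧ P (Y i) ∧
        HomogeneousOver f (X.filter (· < minN (Z i))) (Y i)) ∧
      ∀ i ∈ s, ∀ j ∈ s, i < j → ∀ x ∈ Y i, ∀ y ∈ Y j, f {x, y} = f {minN (Y i), minN (Y j)} := by
  induction s using Finset.induction_on_min with
  | empty => exact ⟨fun _ => ∅, by simp, by simp⟩
  | insert a s ha ih =>
    have has : a ∉ s := fun h => lt_irrefl a (ha a h)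
    have hcard : s.card < (insert a s).card := by rw [card_insert_of_notMem has]; omega
    obtain ⟨Y, hY, hYf⟩ := ih (fun i hi => hZX i (mem_insert_of_mem hi))
      (fun i hi j hj => hZ i (mem_insert_of_mem hi) j (mem_insert_of_mem hj))
      fun i hi T hT => hrefine i (mem_insert_of_mem hi) T (hT.trans hcard)
    -- `Z a` lies below the other blocks, so it is refined last, against their minima
    obtain ⟨Ya, hYaZ, hYane, hYaP, hYahom⟩ := hrefine a (mem_insert_self a s)
      (s.image fun j => minN (Y j)) (card_image_le.trans_lt hcard)
    have hupd : ∀ j ∈ s, Function.update Y a Ya j = Y j :=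
      fun j hj => Function.update_of_ne (ne_of_mem_of_not_mem hj has) _ _
    refine ⟨Function.update Y a Ya, fun i hi => ?_, fun i hi j hj hij x hx y hy => ?_⟩
    · rcases mem_insert.1 hi with rfl | hi
      · simpa using ⟨hYaZ, hYane, hYaP, hYahom.mono subset_union_left⟩
      · rw [hupd i hi]
        exact hY i hi
    rcases mem_insert.1 hi with rfl | hi' <;> rcases mem_insert.1 hj with rfl | hj'
    · exact absurd hij (lt_irrefl _)
    · rw [hupd j hj'] at hy ⊢
      rw [Function.update_self] at hx ⊢
      obtain ⟨hYjZ, hYjne, -, hYjhom⟩ := hY j hj'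
      have hmj := minN_mem hYjne
      have hxX : x ∈ X := hZX _ hi (hYaZ hx)
      have hxj : x < minN (Z j) :=
        hZ _ hi j hj hij x (hYaZ hx) _ (minN_mem (hYjne.mono hYjZ))
      calc f {x, y} = f {x, minN (Y j)} := hYjhom x (mem_filter.2 ⟨hxX, hxj⟩) y hy _ hmj
        _ = f {minN (Y j), x} := by rw [pair_comm]
        _ = f {minN (Y j), minN Ya} :=
          hYahom _ (mem_union_right _ (mem_image_of_mem _ hj')) x hx _ (minN_mem hYane)
        _ = f {minN Ya, minN (Y j)} := by rw [pair_comm]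
    · exact absurd (ha i hi') (not_lt.2 hij.le)
    · simp only [hupd i hi', hupd j hj'] at hx hy ⊢
      exact hYf i hi' j hj' hij x hx y hy

theorem exists_homogeneous_family [DecidableEq ι] (s : Finset ι) (hZX : ∀ i ∈ s, Z i ⊆ X)
    (hZ : ∀ i ∈ s, ∀ j ∈ s, i < j → SetBelow (Z i) (Z j))
    (hrefine : ∀ i ∈ s, ∀ T : Finset ℕ, T.card < s.card → ∃ Y ⊆ Z i, Y.Nonempty ∧ P Y ∧
      HomogeneousOver f (X.filter (· < minN (Z i)) ∪ T) Y) :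
    ∃ Y : ι → Finset ℕ, (∀ i ∈ s, Y i ⊆ Z i ∧ P (Y i)) ∧ ∃ c : Finset ι → β,
      ∀ i ∈ s, ∀ j ∈ s, i ≠ j → ∀ x ∈ Y i, ∀ y ∈ Y j, f {x, y} = c {i, j} := by
  obtain ⟨Y, hY, hYf⟩ := exists_homogeneous_family_minN f P X Z s hZX hZ hrefine
  refine ⟨Y, fun i hi => ⟨(hY i hi).1, (hY i hi).2.2.1⟩, fun T => f (T.image fun i => minN (Y i)),
    fun i hi j hj hij x hx y hy => ?_⟩
  dsimp only
  rw [image_insert, image_singleton]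
  rcases hij.lt_or_gt with h | h
  · exact hYf i hi j hj h x hx y hy
  · rw [pair_comm x, pair_comm (minN (Y i))]
    exact hYf j hj i hi h y hy x hx

end Family

theorem exists_homogeneousOver_subset_of_card_lt {θ : ℕ → ℕ → ℕ → Prop} {n k : ℕ}
    {X Z T : Finset ℕ} (f : Finset ℕ → Fin 2) (hZ : Z ∈ LargeStar θ (n + 2)) (hZX : Z ⊆ X)
    (hX : ExpSparse X) (hmin : 2 ^ k ≤ minN X) (hT : T.card < k) :
    ∃ Y ⊆ Z, Y.Nonempty ∧ Y ∈ LargeStar θ n ∧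
      HomogeneousOver f (X.filter (· < minN Z) ∪ T) Y := by
  have hm : minN Z ∈ X := hZX (minN_mem (largeStar_nonempty hZ))
  have hS : 2 ^ (X.filter (· < minN Z) ∪ T).card < minN Z :=
    two_pow_lt_of_lt_card_filter_add hX hm hmin ((card_union_le _ _).trans_lt (by omega))
  obtain ⟨Y, hYZ, hY, hhom⟩ :=
    exists_homogeneousOver_subset f _ hZ (hX.mono hZX) (by simpa using hS)
  exact ⟨Y, hYZ, largeStar_nonempty hY, hY, hhom⟩

theorem stmt_15_general (θ : ℕ → ℕ → ℕ → Prop) (n d : ℕ) (X : Finset ℕ)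
    (hX : X ∈ MulSeq θ (LargeStar θ (n + 2)) (List.replicate n d))
    (hsp : ExpSparse X) (hmin : 2 ^ d ^ n ≤ minN X)
    (f : Finset ℕ → Fin 2) :
    ∃ Y : List (Fin d) → Finset ℕ,
      (∀ σ : List (Fin d), σ.length = n → Y σ ∈ LargeStar θ n ∧ Y σ ⊆ X) ∧
      (∃ g : List (Fin d) → Finset ℕ,
        (∀ σ : List (Fin d), σ.length ≤ n →
          (↑(g σ) : Set ℕ) =
            ⋃ (ρ : List (Fin d)) (_ : ρ.length = n ∧ σ <+: ρ), (↑(Y ρ) : Set ℕ)) ∧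
        (∀ ℓ ≤ n, ∀ σ τ : List (Fin d), σ.length = ℓ → τ.length = ℓ →
          List.Lex (· < ·) σ τ →
          SetBelow (g σ) (g τ) ∧ ThetaApart θ (g σ) (g τ))) ∧
      (∃ c : Finset (List (Fin d)) → Fin 2,
        ∀ σ τ : List (Fin d), σ.length = n → τ.length = n → σ ≠ τ →
          ∀ x ∈ Y σ, ∀ y ∈ Y τ, f {x, y} = c {σ, τ}) := by
  obtain ⟨N, hNX, hN⟩ := exists_isSeparatedTree (fun _ => largeStar_nonempty) n hX
  have hNX' σ : N σ ⊆ X := hNX ▸ hN.prefix_subset [] σ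
  obtain ⟨Y, hY, c, hc⟩ := exists_homogeneous_family f (· ∈ LargeStar θ n) X N (words d n)
    (fun σ _ => hNX' σ)
    (fun σ hσ τ hτ hlt => (hN.apart σ τ (by rw [mem_words.1 hσ, mem_words.1 hτ])
      (mem_words.1 hτ).le hlt).1)
    fun σ hσ T hT => exists_homogeneousOver_subset_of_card_lt f (hN.leaf_mem σ (mem_words.1 hσ))
      (hNX' σ) hsp hmin (hT.trans_le (card_words_le d n))
  have hY' σ (hσ : σ.length = n) := hY σ (mem_words.2 hσ)
  refine ⟨Y, fun σ hσ => ⟨(hY' σ hσ).2, (hY' σ hσ).1.trans (hNX' σ)⟩,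
    ⟨subtreeUnion Y n, fun σ _ => coe_subtreeUnion Y n σ, fun ℓ hℓ σ τ hσ hτ hlex => ?_⟩,
    c, fun σ τ hσ hτ => hc σ (mem_words.2 hσ) τ (mem_words.2 hτ)⟩
  exact hN.subtreeUnion_apart (fun ρ hρ => ⟨(hY' ρ hρ).1, largeStar_nonempty (hY' ρ hρ).2⟩)
    (hσ.trans hτ.symm) (hτ.trans_le hℓ) hlex

/-- grouping principle. -/
theorem stmt_15 (θ : ℕ → ℕ → ℕ → Prop) (n d : ℕ) (X : Finset ℕ)
    (h3 : 3 ≤ minN X)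
    (hX : X ∈ MulSeq θ (LargeStar θ (n + 2)) (List.replicate n d))
    (hsp : ExpSparse X) (hmin : 2 ^ d ^ n ≤ minN X)
    (f : Finset ℕ → Fin 2) :
    ∃ Y : List (Fin d) → Finset ℕ,
      (∀ σ : List (Fin d), σ.length = n → Y σ ∈ LargeStar θ n ∧ Y σ ⊆ X) ∧
      (∃ g : List (Fin d) → Finset ℕ,
        (∀ σ : List (Fin d), σ.length ≤ n →
          (↑(g σ) : Set ℕ) =
            ⋃ (ρ : List (Fin d)) (_ : ρ.length = n ∧ σ <+: ρ), (↑(Y ρ) : Set ℕ)) ∧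
        (∀ ℓ ≤ n, ∀ σ τ : List (Fin d), σ.length = ℓ → τ.length = ℓ →
          List.Lex (· < ·) σ τ →
          SetBelow (g σ) (g τ) ∧ ThetaApart θ (g σ) (g τ))) ∧
      (∃ c : Finset (List (Fin d)) → Fin 2,
        ∀ σ τ : List (Fin d), σ.length = n → τ.length = n → σ ≠ τ →
          ∀ x ∈ Y σ, ∀ y ∈ Y τ, f {x, y} = c {σ, τ}) :=
  stmt_15_general θ n d X hX hsp hmin f
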